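/- Take α = 2/Δt. Let V^h be a set of pairs (wʰ,vʰ) (wʰ : ℝ² → ℝ differentiable with ∇wʰ square-integrable on Ω and trace square-integrable on (0,1), vʰ : (0,1) → ℝ square-integrable) that is closed under addition and real scalar multiplication. Let Φ = (φ,η) and Φʰ = (φʰ,ηʰ) be pairs satisfying the same integrability conditions, with Φʰ ∈ V^h, and assume Galerkin orthogonality: B_m(Wʰ, Φ − Φʰ) = 0 for every Wʰ ∈ V^h. Then the quasi-optimality estimate |||Φ − Φʰ|||_m ≤ 2·|||Φ − Wʰ|||_m holds for every Wʰ ∈ V^h, where |||(w,v)|||²_m = ‖∇w‖²_Ω + (2/(g·Δt²))·‖w‖²_Γ + (g/2)·‖v‖²_Γ. -/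

import Mathlib

/-!
With `α = 2/Δt` the monolithic form splits as `B_m(W,Φ) = S(W,Φ) + (1/Δt)((v,φ)_Γ − (w,η)_Γ)`,
where `S` is the inner product whose square norm is `|||·|||²_m`. The skew part vanishes on the
diagonal, so `B_m(W,W) = |||W|||²_m`. Because the weights `2/(gΔt²)` and `g/2` of `|||·|||²_m`
multiply to `1/Δt²`, Cauchy–Schwarz bounds the skew part, like `S`, by `|||W|||_m |||Φ|||_m`, so
`B_m` is bounded with constant `2`. Cea's argument then applies to the error `E = Φ − Φʰ`:
Galerkin orthogonality gives `|||E|||²_m = B_m(E,E) = B_m(Φ − Wʰ, E) ≤ 2 |||Φ − Wʰ|||_m |||E|||_m`.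
-/

open MeasureTheory Real Set

noncomputable section

/-- The computational domain `Ω = (0,1) × (0,1) ⊂ ℝ²`. -/
def Om : Set (ℝ × ℝ) := Ioo (0:ℝ) 1 ×ˢ Ioo (0:ℝ) 1

/-- Partial derivative in the horizontal direction `x`. -/
def pdx (w : ℝ × ℝ → ℝ) (p : ℝ × ℝ) : ℝ := fderiv ℝ w p (1, 0)

/-- Partial derivative in the vertical direction `z`. -/
def pdz (w : ℝ × ℝ → ℝ) (p : ℝ × ℝ) : ℝ := fderiv ℝ w p (0, 1)

/-- Interior inner product `(∇w, ∇φ)_Ω = ∫_Ω ∇w·∇φ`. -/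
def ipOm (w φ : ℝ × ℝ → ℝ) : ℝ := ∫ p in Om, (pdx w p * pdx φ p + pdz w p * pdz φ p)

/-- Free-surface inner product `(a, b)_Γ = ∫₀¹ a(x) b(x) dx`. -/
def ipGa (a b : ℝ → ℝ) : ℝ := ∫ x in Ioo (0:ℝ) 1, a x * b x

/-- The trace of `w : ℝ² → ℝ` on the free surface `Γ` (the top edge `z = 1`). -/
def tr (w : ℝ × ℝ → ℝ) : ℝ → ℝ := fun x => w (x, 1)

/-- The gradient of `w` is square-integrable on `Ω`. -/
def GradL2 (w : ℝ × ℝ → ℝ) : Prop :=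
  MemLp (pdx w) 2 (volume.restrict Om) ∧ MemLp (pdz w) 2 (volume.restrict Om)

/-- The trace of `w` on the free surface is square-integrable on `(0,1)`. -/
def TraceL2 (w : ℝ × ℝ → ℝ) : Prop :=
  MemLp (tr w) 2 (volume.restrict (Ioo (0:ℝ) 1))

/-- A boundary function `v : (0,1) → ℝ` is square-integrable. -/
def BdryL2 (v : ℝ → ℝ) : Prop :=
  MemLp v 2 (volume.restrict (Ioo (0:ℝ) 1))

/-- The time-discrete monolithic bilinear form with parameter `α`:
`B_m(W,Φ) = (∇w,∇φ)_Ω − (2/Δt)(w,η)_Γ + (1/2)(v + (α/g)w, (2/Δt)φ + gη)_Γ`. -/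
def Bm (g Δt α : ℝ) (w : ℝ × ℝ → ℝ) (v : ℝ → ℝ) (φ : ℝ × ℝ → ℝ) (η : ℝ → ℝ) : ℝ :=
  ipOm w φ - (2 / Δt) * ipGa (tr w) η
    + (1 / 2) * ipGa (fun x => v x + (α / g) * tr w x)
        (fun x => (2 / Δt) * tr φ x + g * η x)

/-- The squared monolithic norm `|||W|||²_m = ‖∇w‖²_Ω + (2/(gΔt²))‖w‖²_Γ + (g/2)‖v‖²_Γ`. -/
def nmM2 (g Δt : ℝ) (w : ℝ × ℝ → ℝ) (v : ℝ → ℝ) : ℝ :=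
  ipOm w w + (2 / (g * Δt ^ 2)) * ipGa (tr w) (tr w) + (g / 2) * ipGa v v

/-- The regularity assumptions on a pair `W = (w,v)`: `w` differentiable with
square-integrable gradient and square-integrable trace, `v` square-integrable. -/
def Reg (W : (ℝ × ℝ → ℝ) × (ℝ → ℝ)) : Prop :=
  Differentiable ℝ W.1 ∧ GradL2 W.1 ∧ TraceL2 W.1 ∧ BdryL2 W.2

section L2

variable {X : Type*} [MeasurableSpace X] {μ : Measure X} {f g : X → ℝ}

theorem inner_toLp_eq_integral_mul (hf : MemLp f 2 μ) (hg : MemLp g 2 μ) :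
    inner ℝ (hf.toLp f) (hg.toLp g) = ∫ x, f x * g x ∂μ := by
  rw [L2.inner_def]
  refine integral_congr_ae ?_
  filter_upwards [hf.coeFn_toLp, hg.coeFn_toLp] with x hfx hgx
  simp [hfx, hgx, mul_comm]

theorem abs_integral_mul_le_sqrt_mul_sqrt (hf : MemLp f 2 μ) (hg : MemLp g 2 μ) :
    |∫ x, f x * g x ∂μ| ≤ √(∫ x, f x * f x ∂μ) * √(∫ x, g x * g x ∂μ) := by
  rw [← inner_toLp_eq_integral_mul hf hg, ← inner_toLp_eq_integral_mul hf hf,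
    ← inner_toLp_eq_integral_mul hg hg, ← norm_eq_sqrt_real_inner, ← norm_eq_sqrt_real_inner]
  exact abs_real_inner_le_norm _ _

end L2

theorem sqrt_mul_sqrt_add_sqrt_mul_sqrt_le {a b c d : ℝ} (ha : 0 ≤ a) (hb : 0 ≤ b)
    (hc : 0 ≤ c) (hd : 0 ≤ d) : √a * √b + √c * √d ≤ √(a + c) * √(b + d) := by
  simpa using Real.sum_sqrt_mul_sqrt_le Finset.univ (f := ![a, c]) (g := ![b, d])
    (by simp [Fin.forall_fin_two, ha, hc]) (by simp [Fin.forall_fin_two, hb, hd])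

theorem sqrt_mul_sqrt_add_weighted_le {c d A₁ A₂ A₃ B₁ B₂ B₃ : ℝ} (hc : 0 ≤ c) (hd : 0 ≤ d)
    (hA₁ : 0 ≤ A₁) (hA₂ : 0 ≤ A₂) (hA₃ : 0 ≤ A₃) (hB₁ : 0 ≤ B₁) (hB₂ : 0 ≤ B₂) (hB₃ : 0 ≤ B₃) :
    √A₁ * √B₁ + c * (√A₂ * √B₂) + d * (√A₃ * √B₃)
      ≤ √(A₁ + c * A₂ + d * A₃) * √(B₁ + c * B₂ + d * B₃) := by
  have weight : ∀ {k : ℝ} (a b : ℝ), 0 ≤ k → k * (√a * √b) = √(k * a) * √(k * b) :=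
    fun a b hk => by rw [sqrt_mul hk, sqrt_mul hk, mul_mul_mul_comm, mul_self_sqrt hk]
  rw [weight _ _ hc, weight _ _ hd]
  calc _ ≤ √(A₁ + c * A₂) * √(B₁ + c * B₂) + √(d * A₃) * √(d * B₃) := by
        gcongr
        exact sqrt_mul_sqrt_add_sqrt_mul_sqrt_le hA₁ hB₁ (by positivity) (by positivity)
    _ ≤ _ := sqrt_mul_sqrt_add_sqrt_mul_sqrt_le (by positivity) (by positivity)
        (by positivity) (by positivity)

theorem sqrt_mul_mul_cross_le {c d A₁ A₂ A₃ B₁ B₂ B₃ : ℝ} (hc : 0 ≤ c) (hd : 0 ≤ d)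
    (hA₁ : 0 ≤ A₁) (hA₂ : 0 ≤ A₂) (hA₃ : 0 ≤ A₃) (hB₁ : 0 ≤ B₁) (hB₂ : 0 ≤ B₂) (hB₃ : 0 ≤ B₃) :
    √(c * d) * (√A₃ * √B₂ + √A₂ * √B₃)
      ≤ √(A₁ + c * A₂ + d * A₃) * √(B₁ + c * B₂ + d * B₃) := by
  have cross : √(c * d) * (√A₃ * √B₂ + √A₂ * √B₃)
      = √(d * A₃) * √(c * B₂) + √(c * A₂) * √(d * B₃) := by
    simp only [sqrt_mul hc, sqrt_mul hd]; ring
  rw [cross]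
  calc _ ≤ √(d * A₃ + c * A₂) * √(c * B₂ + d * B₃) :=
        sqrt_mul_sqrt_add_sqrt_mul_sqrt_le (by positivity) (by positivity)
          (by positivity) (by positivity)
    _ ≤ _ := by gcongr √?_ * √?_ <;> linarith

theorem le_of_sq_le_mul {m n : ℝ} (hm : 0 ≤ m) (h : n ^ 2 ≤ m * n) : n ≤ m := by
  nlinarith

theorem pdx_sub {w₁ w₂ : ℝ × ℝ → ℝ} (h₁ : Differentiable ℝ w₁) (h₂ : Differentiable ℝ w₂) :
    pdx (w₁ - w₂) = pdx w₁ - pdx w₂ := by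
  ext p; simp [pdx, fderiv_sub (h₁ p) (h₂ p)]

theorem pdz_sub {w₁ w₂ : ℝ × ℝ → ℝ} (h₁ : Differentiable ℝ w₁) (h₂ : Differentiable ℝ w₂) :
    pdz (w₁ - w₂) = pdz w₁ - pdz w₂ := by
  ext p; simp [pdz, fderiv_sub (h₁ p) (h₂ p)]

theorem Reg.sub {W₁ W₂ : (ℝ × ℝ → ℝ) × (ℝ → ℝ)} (h₁ : Reg W₁) (h₂ : Reg W₂) :
    Reg (W₁ - W₂) := by
  obtain ⟨hd₁, ⟨hx₁, hz₁⟩, ht₁, hb₁⟩ := h₁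
  obtain ⟨hd₂, ⟨hx₂, hz₂⟩, ht₂, hb₂⟩ := h₂
  refine ⟨hd₁.sub hd₂, ⟨?_, ?_⟩, ht₁.sub ht₂, hb₁.sub hb₂⟩
  · simpa only [Prod.fst_sub, pdx_sub hd₁ hd₂] using hx₁.sub hx₂
  · simpa only [Prod.fst_sub, pdz_sub hd₁ hd₂] using hz₁.sub hz₂

theorem ipGa_comm (a b : ℝ → ℝ) : ipGa a b = ipGa b a := by
  simp only [ipGa, mul_comm]

theorem ipGa_self_nonneg (a : ℝ → ℝ) : 0 ≤ ipGa a a :=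
  setIntegral_nonneg measurableSet_Ioo fun _ _ => mul_self_nonneg _

theorem ipGa_sub_left {a b c : ℝ → ℝ} (ha : BdryL2 a) (hb : BdryL2 b) (hc : BdryL2 c) :
    ipGa (fun x => a x - b x) c = ipGa a c - ipGa b c := by
  simp only [ipGa, sub_mul]
  exact integral_sub (ha.integrable_mul hc) (hb.integrable_mul hc)

theorem abs_ipGa_le_sqrt_mul_sqrt {a b : ℝ → ℝ} (ha : BdryL2 a) (hb : BdryL2 b) :
    |ipGa a b| ≤ √(ipGa a a) * √(ipGa b b) :=
  abs_integral_mul_le_sqrt_mul_sqrt ha hb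

theorem ipGa_add_mul_add_mul {a b c d : ℝ → ℝ} (ha : BdryL2 a) (hb : BdryL2 b)
    (hc : BdryL2 c) (hd : BdryL2 d) (k l m : ℝ) :
    ipGa (fun x => a x + k * b x) (fun x => l * c x + m * d x)
      = l * ipGa a c + m * ipGa a d + k * (l * ipGa b c + m * ipGa b d) := by
  have hac : Integrable (fun x => a x * c x) _ := ha.integrable_mul hc
  have had : Integrable (fun x => a x * d x) _ := ha.integrable_mul hd
  have hbc : Integrable (fun x => b x * c x) _ := hb.integrable_mul hc
  have hbd : Integrable (fun x => b x * d x) _ := hb.integrable_mul hd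
  calc ipGa (fun x => a x + k * b x) (fun x => l * c x + m * d x)
      = ∫ x in Ioo (0:ℝ) 1, (l * (a x * c x) + m * (a x * d x))
          + k * (l * (b x * c x) + m * (b x * d x)) := by
        simp only [ipGa]; congr 1; ext x; ring
    _ = _ := by
        have hac_ad : Integrable (fun x => l * (a x * c x) + m * (a x * d x)) _ :=
          (hac.const_mul l).add (had.const_mul m)
        have hbc_bd : Integrable (fun x => l * (b x * c x) + m * (b x * d x)) _ :=
          (hbc.const_mul l).add (hbd.const_mul m)
        rw [integral_add hac_ad (hbc_bd.const_mul k), integral_const_mul,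
          integral_add (hac.const_mul l) (had.const_mul m),
          integral_add (hbc.const_mul l) (hbd.const_mul m)]
        simp only [integral_const_mul, ipGa]

theorem ipOm_self_nonneg (w : ℝ × ℝ → ℝ) : 0 ≤ ipOm w w :=
  integral_nonneg fun _ => add_nonneg (mul_self_nonneg _) (mul_self_nonneg _)

theorem ipOm_eq_integral_add_integral {w φ : ℝ × ℝ → ℝ} (hw : GradL2 w) (hφ : GradL2 φ) :
    ipOm w φ = (∫ p in Om, pdx w p * pdx φ p) + ∫ p in Om, pdz w p * pdz φ p :=
  integral_add (hw.1.integrable_mul hφ.1) (hw.2.integrable_mul hφ.2)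

theorem ipOm_sub_left {w₁ w₂ φ : ℝ × ℝ → ℝ} (hd₁ : Differentiable ℝ w₁)
    (hd₂ : Differentiable ℝ w₂) (h₁ : GradL2 w₁) (h₂ : GradL2 w₂) (hφ : GradL2 φ) :
    ipOm (w₁ - w₂) φ = ipOm w₁ φ - ipOm w₂ φ := by
  rw [ipOm, pdx_sub hd₁ hd₂, pdz_sub hd₁ hd₂, ipOm, ipOm, ← integral_sub]
  · congr 1; ext p; simp only [Pi.sub_apply]; ring
  · exact (h₁.1.integrable_mul hφ.1).add (h₁.2.integrable_mul hφ.2)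
  · exact (h₂.1.integrable_mul hφ.1).add (h₂.2.integrable_mul hφ.2)

theorem ipOm_le_sqrt_mul_sqrt {w φ : ℝ × ℝ → ℝ} (hw : GradL2 w) (hφ : GradL2 φ) :
    ipOm w φ ≤ √(ipOm w w) * √(ipOm φ φ) := by
  have hsq : ∀ u : ℝ × ℝ → ℝ, 0 ≤ ∫ p in Om, u p * u p :=
    fun u => integral_nonneg fun _ => mul_self_nonneg _
  rw [ipOm_eq_integral_add_integral hw hφ, ipOm_eq_integral_add_integral hw hw,
    ipOm_eq_integral_add_integral hφ hφ]
  refine le_trans (add_le_add ?_ ?_) (sqrt_mul_sqrt_add_sqrt_mul_sqrt_le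
    (hsq _) (hsq _) (hsq _) (hsq _))
  · exact (le_abs_self _).trans (abs_integral_mul_le_sqrt_mul_sqrt hw.1 hφ.1)
  · exact (le_abs_self _).trans (abs_integral_mul_le_sqrt_mul_sqrt hw.2 hφ.2)

theorem nmM2_nonneg {g : ℝ} (hg : 0 ≤ g) (Δt : ℝ) (w : ℝ × ℝ → ℝ) (v : ℝ → ℝ) :
    0 ≤ nmM2 g Δt w v := by
  have := ipOm_self_nonneg w
  have := ipGa_self_nonneg (tr w)
  have := ipGa_self_nonneg v
  unfold nmM2
  positivity

theorem Bm_sub_left {g Δt α : ℝ} {W₁ W₂ Φ : (ℝ × ℝ → ℝ) × (ℝ → ℝ)}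
    (h₁ : Reg W₁) (h₂ : Reg W₂) (hΦ : Reg Φ) :
    Bm g Δt α (W₁ - W₂).1 (W₁ - W₂).2 Φ.1 Φ.2
      = Bm g Δt α W₁.1 W₁.2 Φ.1 Φ.2 - Bm g Δt α W₂.1 W₂.2 Φ.1 Φ.2 := by
  obtain ⟨hd₁, hG₁, ht₁, hb₁⟩ := h₁
  obtain ⟨hd₂, hG₂, ht₂, hb₂⟩ := h₂
  obtain ⟨-, hGΦ, htΦ, hbΦ⟩ := hΦ
  have hsurf : ipGa (fun x => (W₁ - W₂).2 x + α / g * tr (W₁ - W₂).1 x)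
      (fun x => 2 / Δt * tr Φ.1 x + g * Φ.2 x)
      = ipGa (fun x => W₁.2 x + α / g * tr W₁.1 x) (fun x => 2 / Δt * tr Φ.1 x + g * Φ.2 x)
        - ipGa (fun x => W₂.2 x + α / g * tr W₂.1 x)
            (fun x => 2 / Δt * tr Φ.1 x + g * Φ.2 x) := by
    have hL₁ : BdryL2 (fun x => W₁.2 x + α / g * tr W₁.1 x) := hb₁.add (ht₁.const_mul _)
    have hL₂ : BdryL2 (fun x => W₂.2 x + α / g * tr W₂.1 x) := hb₂.add (ht₂.const_mul _)
    have hR : BdryL2 (fun x => 2 / Δt * tr Φ.1 x + g * Φ.2 x) :=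
      (htΦ.const_mul _).add (hbΦ.const_mul _)
    rw [← ipGa_sub_left hL₁ hL₂ hR]
    congr 1; ext x; simp only [tr, Prod.fst_sub, Prod.snd_sub, Pi.sub_apply]; ring
  rw [Bm, hsurf, Prod.fst_sub, ipOm_sub_left hd₁ hd₂ hG₁ hG₂ hGΦ,
    show tr (W₁.1 - W₂.1) = fun x => tr W₁.1 x - tr W₂.1 x from rfl,
    ipGa_sub_left ht₁ ht₂ hbΦ, Bm, Bm]
  ring

theorem Bm_two_div_eq {g Δt : ℝ} (hg : g ≠ 0) {w φ : ℝ × ℝ → ℝ} {v η : ℝ → ℝ}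
    (hw : TraceL2 w) (hv : BdryL2 v) (hφ : TraceL2 φ) (hη : BdryL2 η) :
    Bm g Δt (2 / Δt) w v φ η
      = ipOm w φ + 2 / (g * Δt ^ 2) * ipGa (tr w) (tr φ) + g / 2 * ipGa v η
        + 1 / Δt * (ipGa v (tr φ) - ipGa (tr w) η) := by
  rw [Bm, ipGa_add_mul_add_mul hv hw hφ hη]
  field_simp
  ring

theorem Bm_self_eq_nmM2 {g Δt : ℝ} (hg : g ≠ 0) {w : ℝ × ℝ → ℝ} {v : ℝ → ℝ}
    (hw : TraceL2 w) (hv : BdryL2 v) : Bm g Δt (2 / Δt) w v w v = nmM2 g Δt w v := by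
  rw [Bm_two_div_eq hg hw hv hw hv, ipGa_comm v (tr w), sub_self, mul_zero, add_zero, nmM2]

theorem Bm_le_two_mul_sqrt_mul_sqrt {g Δt : ℝ} (hg : 0 < g) (hΔt : 0 < Δt)
    {w φ : ℝ × ℝ → ℝ} {v η : ℝ → ℝ} (hwG : GradL2 w) (hw : TraceL2 w) (hv : BdryL2 v)
    (hφG : GradL2 φ) (hφ : TraceL2 φ) (hη : BdryL2 η) :
    Bm g Δt (2 / Δt) w v φ η ≤ 2 * √(nmM2 g Δt w v) * √(nmM2 g Δt φ η) := by
  rw [Bm_two_div_eq hg.ne' hw hv hφ hη, nmM2, nmM2]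
  set c := 2 / (g * Δt ^ 2)
  set d := g / 2
  have hc : 0 ≤ c := by positivity
  have hd : 0 ≤ d := by positivity
  have hcd : 1 / Δt = √(c * d) := by
    rw [show c * d = (1 / Δt) ^ 2 by simp only [c, d]; field_simp, sqrt_sq (by positivity)]
  obtain ⟨-, hww⟩ := abs_le.mp (abs_ipGa_le_sqrt_mul_sqrt hw hφ)
  obtain ⟨-, hvη⟩ := abs_le.mp (abs_ipGa_le_sqrt_mul_sqrt hv hη)
  obtain ⟨-, hvφ⟩ := abs_le.mp (abs_ipGa_le_sqrt_mul_sqrt hv hφ)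
  obtain ⟨hwη, -⟩ := abs_le.mp (abs_ipGa_le_sqrt_mul_sqrt hw hη)
  have hcross : √(c * d) * (ipGa v (tr φ) - ipGa (tr w) η)
      ≤ √(c * d)
          * (√(ipGa v v) * √(ipGa (tr φ) (tr φ)) + √(ipGa (tr w) (tr w)) * √(ipGa η η)) :=
    mul_le_mul_of_nonneg_left (by linarith) (sqrt_nonneg _)
  have hΩ := ipOm_le_sqrt_mul_sqrt hwG hφG
  have hcww := mul_le_mul_of_nonneg_left hww hc
  have hdvη := mul_le_mul_of_nonneg_left hvη hd
  have hsym := sqrt_mul_sqrt_add_weighted_le hc hd (ipOm_self_nonneg w)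
    (ipGa_self_nonneg (tr w)) (ipGa_self_nonneg v) (ipOm_self_nonneg φ)
    (ipGa_self_nonneg (tr φ)) (ipGa_self_nonneg η)
  have hskew := sqrt_mul_mul_cross_le hc hd (ipOm_self_nonneg w)
    (ipGa_self_nonneg (tr w)) (ipGa_self_nonneg v) (ipOm_self_nonneg φ)
    (ipGa_self_nonneg (tr φ)) (ipGa_self_nonneg η)
  rw [hcd]
  linarith

/-- Quasi-optimality (Cea's estimate) for the monolithic formulation with `α = 2/Δt`:
Galerkin orthogonality implies `|||Φ − Φʰ|||_m ≤ 2·|||Φ − Wʰ|||_m` for all `Wʰ ∈ Vʰ`. -/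
theorem monolithic_quasi_optimality
    (g Δt : ℝ) (hg : 0 < g) (hΔt : 0 < Δt)
    (Vh : Set ((ℝ × ℝ → ℝ) × (ℝ → ℝ)))
    (hVreg : ∀ W ∈ Vh, Reg W)
    (hVadd : ∀ W1 ∈ Vh, ∀ W2 ∈ Vh, W1 + W2 ∈ Vh)
    (hVsmul : ∀ (c : ℝ), ∀ W ∈ Vh, c • W ∈ Vh)
    (Φ Φh : (ℝ × ℝ → ℝ) × (ℝ → ℝ))
    (hΦ : Reg Φ) (hΦh : Reg Φh) (hΦhVh : Φh ∈ Vh)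
    (hGal : ∀ Wh ∈ Vh,
      Bm g Δt (2 / Δt) Wh.1 Wh.2 (Φ.1 - Φh.1) (Φ.2 - Φh.2) = 0) :
    ∀ Wh ∈ Vh,
      Real.sqrt (nmM2 g Δt (Φ.1 - Φh.1) (Φ.2 - Φh.2)) ≤
        2 * Real.sqrt (nmM2 g Δt (Φ.1 - Wh.1) (Φ.2 - Wh.2)) := by
  intro Wh hWh
  have hE : Reg (Φ - Φh) := hΦ.sub hΦh
  have hA : Reg (Φ - Wh) := hΦ.sub (hVreg Wh hWh)
  have hD : Wh - Φh ∈ Vh := by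
    simpa [sub_eq_add_neg] using hVadd Wh hWh _ (hVsmul (-1) Φh hΦhVh)
  have hEA : Bm g Δt (2 / Δt) (Φ.1 - Φh.1) (Φ.2 - Φh.2) (Φ.1 - Φh.1) (Φ.2 - Φh.2)
      = Bm g Δt (2 / Δt) (Φ.1 - Wh.1) (Φ.2 - Wh.2) (Φ.1 - Φh.1) (Φ.2 - Φh.2) := by
    have h := Bm_sub_left (g := g) (Δt := Δt) (α := 2 / Δt) hE hA hE
    have h0 := hGal _ hD
    simp only [sub_sub_sub_cancel_left, Prod.fst_sub, Prod.snd_sub] at h h0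
    linarith
  refine le_of_sq_le_mul (by positivity) ?_
  rw [sq_sqrt (nmM2_nonneg hg.le _ _ _)]
  calc nmM2 g Δt (Φ.1 - Φh.1) (Φ.2 - Φh.2)
      = Bm g Δt (2 / Δt) (Φ.1 - Φh.1) (Φ.2 - Φh.2) (Φ.1 - Φh.1) (Φ.2 - Φh.2) :=
        (Bm_self_eq_nmM2 hg.ne' hE.2.2.1 hE.2.2.2).symm
    _ = Bm g Δt (2 / Δt) (Φ.1 - Wh.1) (Φ.2 - Wh.2) (Φ.1 - Φh.1) (Φ.2 - Φh.2) := hEA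
    _ ≤ _ := Bm_le_two_mul_sqrt_mul_sqrt hg hΔt hA.2.1 hA.2.2.1 hA.2.2.2
        hE.2.1 hE.2.2.1 hE.2.2.2
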